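/- arXiv:1207.6161 — 2 statements merged into one kernel-verified Lean document; each statement's English description precedes it below -/
import Mathlib

section
/- Let 1 ≤ j ≤ ℓ and let v^{(j)} = u^{(j)}_{k_1} ∧ u^{(j)}_{k_2} ∧ ⋯ ∧ u^{(j)}_{k_r} be a simple finite q-wedge in sector j. If min{k_1,…,k_r} ≥ s_j − r + 1 and |v^{(j)}|_{s_j} < 0, then v^{(j)} = 0. -/
open scoped BigOperators

/-! Formalization of:  Let `1 ≤ j ≤ ℓ` and let
`v^{(j)} = u^{(j)}_{k_1} ∧ ⋯ ∧ u^{(j)}_{k_r}` be a simple finite `q`-wedge in sector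
`j`.  If `min{k_1, …, k_r} ≥ s_j - r + 1` and `|v^{(j)}|_{s_j} < 0`, then
`v^{(j)} = 0`. -/

/-- The residue `c ∈ {1, …, n}` of the relabeled index `a` (`a = c - nm`). -/
def cRes (n : ℕ) (a : ℤ) : ℤ := (a - 1) % (n : ℤ) + 1

/-- The original label `k = c + n(d-1) - nℓm` of the factor `u^{(d)}_a` with `a = c - nm`. -/
def origK (n ℓ : ℕ) (d : ℕ) (a : ℤ) : ℤ :=
  cRes n a + (n : ℤ) * ((d : ℤ) - 1) - (n : ℤ) * (ℓ : ℤ) * ((cRes n a - a) / (n : ℤ))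

/-- `κ(a_1, …, a_r) = #{(i,j) : i < j, a_i = a_j}`. -/
def kappa {α : Type*} [DecidableEq α] : List α → ℕ
  | [] => 0
  | x :: xs => xs.countP (fun y => decide (y = x)) + kappa xs

/-- `sgn(m)` as in Uglov's straightening rule. -/
def sgnm (m₁ m₂ : ℤ) : ℤ := if m₁ < m₂ then 1 else if m₂ < m₁ then -1 else 0

/-- The sector of the `i`-th factor of a list of factors. -/
def sectorAt (L : List (ℕ × ℤ)) (i : ℕ) : ℕ := (L.getD i (0, 0)).1

/-- The factors of `L` are grouped into (contiguous) simple sector blocks. -/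
def Grouped (L : List (ℕ × ℤ)) : Prop :=
  ∀ i j k : ℕ, i < j → j < k → k < L.length →
    sectorAt L i = sectorAt L k → sectorAt L j = sectorAt L i

/-- The number of sector blocks of `L` preceding the sector-`j` block. -/
def blocksBefore (L : List (ℕ × ℤ)) (j : ℕ) : ℕ :=
  (((L.map Prod.fst).takeWhile (fun d => decide (d ≠ j))).dedup).length

/-- A wedge is *ordered* if its original labels are strictly decreasing. -/
def OrderedW (n ℓ : ℕ) (L : List (ℕ × ℤ)) : Prop :=
  (L.map fun f => origK n ℓ f.1 f.2).Chain' (· > ·) ∧ ∀ f ∈ L, 1 ≤ f.1 ∧ f.1 ≤ ℓ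

/-- An abstract model of the space of finite `q`-wedges (of all lengths), subject to
Uglov's straightening rules.  A factor `u^{(d)}_a` is recorded as the pair `(d, a)` of
its sector `1 ≤ d ≤ ℓ` and its relabeled index `a = c - nm`; a finite `q`-wedge is a
list of factors. -/
structure WedgeModel (n ℓ : ℕ) where
  /-- The ambient `ℚ(q)`-vector space containing all finite `q`-wedges. -/
  V : Type
  [acg : AddCommGroup V]
  [mod : Module (RatFunc ℚ) V]
  /-- The finite `q`-wedge `u^{(d_1)}_{a_1} ∧ ⋯ ∧ u^{(d_r)}_{a_r}`. -/
  w : List (ℕ × ℤ) → V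
  /-- `u_k ∧ u_k = 0`. -/
  w_repeat : ∀ (pre post : List (ℕ × ℤ)) (f : ℕ × ℤ), w (pre ++ [f, f] ++ post) = 0
  /-- Uglov's straightening rule (the two-factor exchange rule, applied in context). -/
  straighten : ∀ (pre post : List (ℕ × ℤ)) (c₁ c₂ : ℤ) (d₁ d₂ : ℕ) (m₁ m₂ : ℤ),
    1 ≤ c₁ → c₁ ≤ n → 1 ≤ c₂ → c₂ ≤ n → 1 ≤ d₁ → d₁ ≤ ℓ → 1 ≤ d₂ → d₂ ≤ ℓ →
    (c₁ + n * ((d₁ : ℤ) - 1) - n * ℓ * m₁ ≠ c₂ + n * ((d₂ : ℤ) - 1) - n * ℓ * m₂) →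
    w (pre ++ [(d₂, c₂ - n * m₂), (d₁, c₁ - n * m₁)] ++ post) =
      ((if d₁ = d₂ then -(RatFunc.X : RatFunc ℚ)⁻¹ else 1) *
        (if c₁ = c₂ then
            (if c₂ + n * ((d₂ : ℤ) - 1) - n * ℓ * m₂ < c₁ + n * ((d₁ : ℤ) - 1) - n * ℓ * m₁
              then (RatFunc.X : RatFunc ℚ) else (RatFunc.X : RatFunc ℚ)⁻¹)
          else 1)) •
        w (pre ++ [(d₁, c₁ - n * m₁), (d₂, c₂ - n * m₂)] ++ post) +
      (((sgnm m₁ m₂ : ℤ) : RatFunc ℚ) * (if d₁ = d₂ then -(RatFunc.X : RatFunc ℚ)⁻¹ else 1) *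
          ((RatFunc.X : RatFunc ℚ) - (RatFunc.X : RatFunc ℚ)⁻¹)) •
        ∑ jj ∈ Finset.Icc
            (if (c₂ < c₁ ∧ m₁ < m₂) ∨ (c₁ < c₂ ∧ m₂ < m₁) then (0 : ℤ) else 1)
            (|m₁ - m₂| -
              (if d₁ = d₂ then 1
               else if (d₁ < d₂ ∧ m₁ < m₂) ∨ (d₂ < d₁ ∧ m₂ < m₁) then 1 else 0)),
          w (pre ++ [((d₁ : ℕ), c₂ - n * m₁ - sgnm m₁ m₂ * n * jj),
                     ((d₂ : ℕ), c₁ - n * m₂ + sgnm m₁ m₂ * n * jj)] ++ post)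
  /-- The ordered wedges are linearly independent. -/
  ordered_indep :
    LinearIndependent (RatFunc ℚ) fun L : {L : List (ℕ × ℤ) // OrderedW n ℓ L} => w L.1
  /-- Every wedge (with sectors in range) is a linear combination of ordered wedges of
  the same length. -/
  ordered_span : ∀ L : List (ℕ × ℤ), (∀ f ∈ L, 1 ≤ f.1 ∧ f.1 ≤ ℓ) →
    w L ∈ Submodule.span (RatFunc ℚ)
      {v | ∃ G : List (ℕ × ℤ), OrderedW n ℓ G ∧ G.length = L.length ∧ v = w G}
  /-- The bar involution on scalars: a ring automorphism with `q ↦ q⁻¹`. -/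
  barq : RatFunc ℚ →+* RatFunc ℚ
  barq_X : barq RatFunc.X = (RatFunc.X)⁻¹
  /-- The bar involution on finite `q`-wedges. -/
  bar : V →+ V
  bar_smul : ∀ (c : RatFunc ℚ) (v : V), bar (c • v) = barq c • bar v
  bar_bar : ∀ v : V, bar (bar v) = v
  /-- `bar (u_{k_1} ∧ ⋯ ∧ u_{k_r}) = (-q)^{κ(d_1,…,d_r)} q^{-κ(c_1,…,c_r)}
  u_{k_r} ∧ ⋯ ∧ u_{k_1}`. -/
  bar_w : ∀ L : List (ℕ × ℤ),
    bar (w L) = ((-(RatFunc.X : RatFunc ℚ)) ^ kappa (L.map Prod.fst) *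
        ((RatFunc.X : RatFunc ℚ)⁻¹) ^ kappa (L.map fun f => cRes n f.2)) • w L.reverse
  /-- The operator `B'_{-m}[j]` on finite `q`-wedges. -/
  Bop : ℕ → ℕ → V →ₗ[RatFunc ℚ] V
  /-- On a wedge whose factors are grouped into simple sector blocks,
  `B'_{-m}[j]` multiplies by `q^{-bm}` (`b` = number of sector blocks preceding the
  sector-`j` block) and applies the level-one boson
  `B_{-m} (u^{(j)}_{k_1} ∧ ⋯) = ∑_i u^{(j)}_{k_1} ∧ ⋯ ∧ u^{(j)}_{k_i + nm} ∧ ⋯`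
  to the sector-`j` block. -/
  Bop_apply : ∀ (m j : ℕ) (L : List (ℕ × ℤ)), Grouped L →
    Bop m j (w L) = ((RatFunc.X : RatFunc ℚ)⁻¹ ^ (blocksBefore L j * m)) •
      ∑ p ∈ (Finset.range L.length).filter (fun p => sectorAt L p = j),
        w (L.set p (j, (L.getD p (0, 0)).2 + n * m))

attribute [instance] WedgeModel.acg WedgeModel.mod

/-- The size `|v|_c = ∑_{i=1}^{r} (k_i - c + i - 1)` of the simple finite `q`-wedge
with index sequence `k` for the charge `c` (0-based indexing). -/
def wsize {r : ℕ} (c : ℤ) (k : Fin r → ℤ) : ℤ :=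
  ∑ i : Fin r, (k i - c + (i.val : ℤ))

/-! Within one sector, the relabeled indices `a = c - nm` are ordered like the labels
`k = c + n(d-1) - nℓm`, so a straightening step rewrites an adjacent pair `x ≤ y` of a simple
wedge either to zero (`x = y`) or into wedges where the pair is replaced by `x + y - v, v` with
`x ≤ v < y` (the swapped pair and Uglov's correction terms). Such a replacement keeps the length
and the sum of the indices and strictly decreases `∑ i * aᵢ`, which is bounded below once all
indices are `≥ s_j - r + 1`; hence straightening terminates, and it can only end at strictly
decreasing index lists. But a strictly decreasing list of `r` integers `≥ s_j - r + 1` has size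
`≥ 0`, so a wedge of negative size straightens to `0`. -/

namespace List

/-- `weightedSum [a₀, …, a_{r-1}] = ∑ i * aᵢ`, computed through suffix sums. -/
def weightedSum : List ℤ → ℤ
  | [] => 0
  | _ :: t => t.sum + weightedSum t

theorem weightedSum_append (P T : List ℤ) :
    weightedSum (P ++ T) = weightedSum P + P.length * T.sum + weightedSum T := by
  induction P with
  | nil => simp [weightedSum]
  | cons a P ih =>
    simp only [cons_append, weightedSum, ih, sum_append, length_cons]
    push_cast
    ring

theorem weightedSum_replace_pair (P Q : List ℤ) {x y u v : ℤ} (h : u + v = x + y) :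
    weightedSum (P ++ u :: v :: Q) = weightedSum (P ++ x :: y :: Q) + (v - y) := by
  simp only [weightedSum_append, weightedSum, sum_cons]
  linear_combination (P.length : ℤ) * h

theorem length_mul_length_sub_one_mul_le_two_mul_weightedSum {B : ℤ} :
    ∀ {A : List ℤ}, (∀ a ∈ A, B ≤ a) → A.length * (A.length - 1) * B ≤ 2 * weightedSum A
  | [], _ => by simp [weightedSum]
  | a :: t, hB => by
    have ht : ∀ b ∈ t, B ≤ b := fun b hb => hB b (mem_cons_of_mem a hb)
    have hsum := card_nsmul_le_sum t B ht
    have ih := length_mul_length_sub_one_mul_le_two_mul_weightedSum ht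
    simp only [length_cons, weightedSum, nsmul_eq_mul] at hsum ⊢
    push_cast
    linarith

theorem add_length_le_of_isChain_gt {B : ℤ} :
    ∀ {a : ℤ} {t : List ℤ}, (a :: t).IsChain (· > ·) → (∀ b ∈ a :: t, B ≤ b) → B + t.length ≤ a
  | a, [], _, hB => by simpa using hB a (by simp)
  | a, b :: t, hc, hB => by
    rw [isChain_cons_cons] at hc
    have := add_length_le_of_isChain_gt hc.2 (fun c hc => hB c (mem_cons_of_mem a hc))
    simp only [length_cons] at this ⊢
    push_cast
    linarith [hc.1]

theorem le_two_mul_sum_of_isChain_gt {B : ℤ} :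
    ∀ {A : List ℤ}, A.IsChain (· > ·) → (∀ a ∈ A, B ≤ a) →
      2 * A.length * B + A.length * (A.length - 1) ≤ 2 * A.sum
  | [], _, _ => by simp
  | a :: t, hc, hB => by
    have ih := le_two_mul_sum_of_isChain_gt hc.tail (fun b hb => hB b (mem_cons_of_mem a hb))
    have hhead := add_length_le_of_isChain_gt hc hB
    simp only [tail_cons, length_cons, sum_cons] at ih ⊢
    push_cast
    linarith

theorem holds_of_sum_lt_of_straighten {P : List ℤ → Prop}
    (step : ∀ (pre post : List ℤ) (x y : ℤ), x ≤ y →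
      (∀ v, x ≤ v → v < y → P (pre ++ (x + y - v) :: v :: post)) → P (pre ++ x :: y :: post))
    {B : ℤ} {A : List ℤ} (hB : ∀ a ∈ A, B ≤ a)
    (hsum : 2 * A.sum < 2 * A.length * B + A.length * (A.length - 1)) : P A := by
  induction hN : (2 * weightedSum A - A.length * (A.length - 1) * B).toNat
    using Nat.strong_induction_on generalizing A with
  | _ N ih =>
  obtain ⟨pre, x, y, post, rfl, hxy⟩ : ∃ pre x y post, A = pre ++ x :: y :: post ∧ x ≤ y := by
    by_contra! h
    exact (le_two_mul_sum_of_isChain_gt (isChain_iff_forall_rel_of_append_cons_cons.mpr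
      fun x y pre post hA => h pre x y post hA) hB).not_gt hsum
  refine step pre post x y hxy fun v hxv hvy => ?_
  set A' := pre ++ (x + y - v) :: v :: post
  have hlen : A'.length = (pre ++ x :: y :: post).length := by simp [A']
  have hsum' : A'.sum = (pre ++ x :: y :: post).sum := by simp [A']; ring
  have hB' : ∀ a ∈ A', B ≤ a := by
    have hx := hB x (by simp)
    intro a ha
    simp only [A', mem_append, mem_cons] at ha
    rcases ha with ha | rfl | rfl | ha
    · exact hB a (by simp [ha])
    · linarith
    · linarith
    · exact hB a (by simp [ha])
  have hws : weightedSum A' = weightedSum (pre ++ x :: y :: post) + (v - y) :=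
    weightedSum_replace_pair pre post (by ring)
  have hlow := length_mul_length_sub_one_mul_le_two_mul_weightedSum hB'
  rw [hlen] at hlow
  refine ih _ ?_ hB' (by rwa [hlen, hsum']) rfl
  rw [← hN, hlen]
  omega

end List

theorem two_mul_sum_fin_val (r : ℕ) : 2 * ∑ i : Fin r, (i.val : ℤ) = r * (r - 1) := by
  rw [Fin.sum_univ_eq_sum_range (fun i => (i : ℤ)) r]
  induction r with
  | zero => simp
  | succ r ih => rw [Finset.sum_range_succ, mul_add, ih]; push_cast; ring

theorem two_mul_wsize {r : ℕ} (c : ℤ) (k : Fin r → ℤ) :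
    2 * wsize c k = 2 * (List.ofFn k).sum - 2 * r * c + r * (r - 1) := by
  have hgauss := two_mul_sum_fin_val r
  simp only [wsize, Finset.sum_add_distrib, Finset.sum_sub_distrib, Finset.sum_const,
    Finset.card_univ, Fintype.card_fin, nsmul_eq_mul, List.sum_ofFn]
  linarith

theorem exists_eq_sub_mul {n : ℕ} (hn : 0 < n) (a : ℤ) :
    ∃ c m : ℤ, 1 ≤ c ∧ c ≤ n ∧ a = c - n * m := by
  refine ⟨(a - 1) % n + 1, -((a - 1) / n), ?_, ?_, ?_⟩
  · linarith [Int.emod_nonneg (a - 1) (by positivity : (n : ℤ) ≠ 0)]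
  · linarith [Int.emod_lt_of_pos (a - 1) (by positivity : (0 : ℤ) < n)]
  · linear_combination -(Int.emod_add_mul_ediv (a - 1) n)

theorem lt_or_eq_and_lt_of_sub_mul_lt {n : ℕ} {c₁ c₂ m₁ m₂ : ℤ} (hc₁ : c₁ ≤ n) (hc₂ : 1 ≤ c₂)
    (h : c₂ - n * m₂ < c₁ - n * m₁) : m₁ < m₂ ∨ m₁ = m₂ ∧ c₂ < c₁ := by
  rcases lt_trichotomy m₁ m₂ with hm | rfl | hm
  · exact Or.inl hm
  · exact Or.inr ⟨rfl, by linarith⟩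
  · have : (n : ℤ) * 1 ≤ n * (m₁ - m₂) := mul_le_mul_of_nonneg_left (by linarith) (by positivity)
    linarith

theorem add_sub_mul_lt_of_lt_or_eq_and_lt {n ℓ : ℕ} (hℓ : 1 ≤ ℓ) {c₁ c₂ m₁ m₂ : ℤ}
    (hc₁ : 1 ≤ c₁) (hc₂ : c₂ ≤ n) (h : m₁ < m₂ ∨ m₁ = m₂ ∧ c₂ < c₁) (e : ℤ) :
    c₂ + e - n * ℓ * m₂ < c₁ + e - n * ℓ * m₁ := by
  rcases h with hm | ⟨rfl, hc⟩
  · have hnℓ : (n : ℤ) * 1 ≤ n * ℓ :=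
      mul_le_mul_of_nonneg_left (by exact_mod_cast hℓ) (by positivity)
    have : (n : ℤ) * ℓ * 1 ≤ n * ℓ * (m₂ - m₁) :=
      mul_le_mul_of_nonneg_left (by linarith) (by positivity)
    linarith
  · linarith

namespace WedgeModel

variable {n ℓ : ℕ} (W : WedgeModel n ℓ)

def simpleWedge (j : ℕ) (A : List ℤ) : W.V := W.w (A.map fun a => (j, a))

theorem simpleWedge_append_cons_cons (j : ℕ) (pre post : List ℤ) (x y : ℤ) :
    W.simpleWedge j (pre ++ x :: y :: post) =
      W.w (pre.map (fun a => (j, a)) ++ [(j, x), (j, y)] ++ post.map fun a => (j, a)) := by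
  simp [simpleWedge]

theorem simpleWedge_append_cons_cons_self (j : ℕ) (pre post : List ℤ) (x : ℤ) :
    W.simpleWedge j (pre ++ x :: x :: post) = 0 := by
  rw [simpleWedge_append_cons_cons]
  exact W.w_repeat _ _ _

theorem simpleWedge_eq_zero_of_straighten (hn : 0 < n) (hℓ : 1 ≤ ℓ) {j : ℕ} (hj1 : 1 ≤ j)
    (hjℓ : j ≤ ℓ) (pre post : List ℤ) {x y : ℤ} (hxy : x ≤ y)
    (h : ∀ v, x ≤ v → v < y → W.simpleWedge j (pre ++ (x + y - v) :: v :: post) = 0) :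
    W.simpleWedge j (pre ++ x :: y :: post) = 0 := by
  rcases hxy.eq_or_lt with rfl | hxy
  · exact W.simpleWedge_append_cons_cons_self j pre post x
  obtain ⟨c₁, m₁, hc₁, hc₁n, rfl⟩ := exists_eq_sub_mul hn y
  obtain ⟨c₂, m₂, hc₂, hc₂n, rfl⟩ := exists_eq_sub_mul hn x
  have hm := lt_or_eq_and_lt_of_sub_mul_lt hc₁n hc₂ hxy
  have hlabel := add_sub_mul_lt_of_lt_or_eq_and_lt hℓ hc₁ hc₂n hm (n * (j - 1))
  rw [simpleWedge_append_cons_cons, W.straighten _ _ c₁ c₂ j j m₁ m₂ hc₁ hc₁n hc₂ hc₂n hj1 hjℓ hj1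
    hjℓ hlabel.ne', ← simpleWedge_append_cons_cons]
  have hswap : W.simpleWedge j (pre ++ (c₁ - n * m₁) :: (c₂ - n * m₂) :: post) = 0 := by
    simpa using h _ le_rfl hxy
  rw [hswap, smul_zero, zero_add]
  rcases hm with hm | ⟨rfl, -⟩
  · have hsgn : sgnm m₁ m₂ = 1 := if_pos hm
    rw [Finset.sum_eq_zero, smul_zero]
    intro jj hjj
    have hlo : (if c₂ < c₁ then 0 else 1) ≤ jj := by
      simpa [hm, hm.not_gt] using (Finset.mem_Icc.mp hjj).1
    have hhi : jj ≤ m₂ - m₁ - 1 := by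
      have := (Finset.mem_Icc.mp hjj).2
      rwa [abs_of_neg (sub_neg.mpr hm), if_pos rfl, neg_sub] at this
    rw [hsgn, one_mul, ← simpleWedge_append_cons_cons]
    have hn' : (0 : ℤ) < n := by exact_mod_cast hn
    convert h (c₁ - n * m₂ + n * jj) ?_ ?_ using 4
    · ring
    · split_ifs at hlo <;> nlinarith
    · nlinarith
  · simp [sgnm]

end WedgeModel

/-- **Lemma**.  Let `v^{(j)} = u^{(j)}_{k_1} ∧ ⋯ ∧ u^{(j)}_{k_r}` be a simple finite
`q`-wedge in sector `j`.  If `min{k_1,…,k_r} ≥ s_j - r + 1` and `|v^{(j)}|_{s_j} < 0`,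
then `v^{(j)} = 0`. -/
theorem simple_wedge_eq_zero_of_size_neg
    (n ℓ : ℕ) (hn : 2 ≤ n) (hℓ : 1 ≤ ℓ) (s : ℕ → ℤ) (W : WedgeModel n ℓ)
    (j : ℕ) (hj1 : 1 ≤ j) (hjℓ : j ≤ ℓ) (r : ℕ) (k : Fin r → ℤ)
    (hmin : ∀ i : Fin r, s j - (r : ℤ) + 1 ≤ k i)
    (hsize : wsize (s j) k < 0) :
    W.w (List.ofFn fun i : Fin r => (j, k i)) = 0 := by
  have hB : ∀ a ∈ List.ofFn k, s j - r + 1 ≤ a := by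
    intro a ha
    obtain ⟨i, rfl⟩ := List.mem_ofFn.mp ha
    exact hmin i
  have hsum : 2 * (List.ofFn k).sum < 2 * (List.ofFn k).length * (s j - r + 1) +
      (List.ofFn k).length * ((List.ofFn k).length - 1) := by
    have := two_mul_wsize (s j) k
    rw [List.length_ofFn]
    linarith
  rw [show (List.ofFn fun i => (j, k i)) = (List.ofFn k).map (j, ·) from (List.map_ofFn ..).symm]
  exact List.holds_of_sum_lt_of_straighten (P := fun A => W.simpleWedge j A = 0)
    (fun pre post _ _ hxy =>
      W.simpleWedge_eq_zero_of_straighten (zero_lt_two.trans_le hn) hℓ hj1 hjℓ pre post hxy)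
    hB hsum
end

section
/- Let n ≥ 2 be an integer. For every partition λ there exist unique partitions μ and ν such that μ is n-restricted and λ_i = μ_i + n·ν_i for all i ≥ 1. -/
open scoped BigOperators

/-! Formalization of:  Let `n ≥ 2` be an integer.  For every partition `λ` there exist
unique partitions `μ` and `ν` such that `μ` is `n`-restricted and
`λ_i = μ_i + n·ν_i` for all `i`. -/

/-- A partition (of arbitrary size): a size together with a `Nat.Partition` of that size. -/
def Ptn : Type := Σ m : ℕ, Nat.Partition m

instance : DecidableEq Ptn := by unfold Ptn; infer_instance

/-- The `i`-th part `λ_{i+1}` (`0`-based) of a partition: the `i`-th entry of the weakly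
decreasing enumeration of the parts, `0` beyond the number of parts. -/
def Ptn.part (l : Ptn) (i : ℕ) : ℕ := ((l.2.parts.sort (· ≤ ·)).reverse).getD i 0

/-- `μ` is `n`-restricted: `0 ≤ μ_i - μ_{i+1} < n` for all `i`. -/
def Ptn.Restricted (n : ℕ) (l : Ptn) : Prop := ∀ i : ℕ, l.part i - l.part (i + 1) < n

/-! Write each jump of `λ` with remainder, `λ_i - λ_{i+1} = r_i + n q_i` with `r_i < n`, and take
for `μ_i` and `ν_i` the tail sums `∑_{j ≥ i} r_j` and `∑_{j ≥ i} q_j`. Conversely, in any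
decomposition the jumps of `μ` lie in `[0, n)` and those of `ν` are nonnegative, so uniqueness of
division with remainder forces them to be `r_i` and `q_i`; since `μ` and `ν` vanish eventually, they
are the tail sums of their jumps. -/

namespace List

theorem eq_of_getD_zero_eq {L₁ L₂ : List ℕ} (h₁ : 0 ∉ L₁) (h₂ : 0 ∉ L₂)
    (h : ∀ i, L₁.getD i 0 = L₂.getD i 0) : L₁ = L₂ := by
  refine ext_getElem? fun i => ?_
  have hi := h i
  simp only [getD_eq_getElem?_getD] at hi
  rcases e₁ : L₁[i]? with _ | a <;> rcases e₂ : L₂[i]? with _ | b <;>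
    simp only [e₁, e₂, Option.getD_none, Option.getD_some] at hi
  · rfl
  · exact absurd (mem_of_getElem? e₂) (hi ▸ h₂)
  · exact absurd (mem_of_getElem? e₁) (hi ▸ h₁)
  · rw [hi]

theorem antitone_getD_zero {L : List ℕ} (h : L.Pairwise (· ≥ ·)) : Antitone (L.getD · 0) := by
  intro i j hij
  show L.getD j 0 ≤ L.getD i 0
  rcases lt_or_ge j L.length with hj | hj
  · rcases hij.lt_or_eq with hlt | rfl
    · simp only [getD_eq_getElem _ _ hj, getD_eq_getElem _ _ (hlt.trans hj)]
      exact pairwise_iff_getElem.1 h i j _ hj hlt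
    · exact le_rfl
  · rw [getD_eq_default _ _ hj]
    exact Nat.zero_le _

end List

namespace Ptn

def sortedParts (l : Ptn) : List ℕ := (l.2.parts.sort (· ≤ ·)).reverse

theorem part_eq_getD (l : Ptn) (i : ℕ) : l.part i = l.sortedParts.getD i 0 := rfl

theorem pairwise_sortedParts (l : Ptn) : l.sortedParts.Pairwise (· ≥ ·) :=
  List.pairwise_reverse.2 (Multiset.pairwise_sort _ _)

theorem coe_sortedParts (l : Ptn) : (l.sortedParts : Multiset ℕ) = l.2.parts := by
  rw [sortedParts, Multiset.coe_reverse, Multiset.sort_eq]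

theorem zero_notMem_sortedParts (l : Ptn) : 0 ∉ l.sortedParts := fun h =>
  (l.2.parts_pos (l.coe_sortedParts ▸ Multiset.mem_coe.2 h)).false

theorem part_antitone (l : Ptn) : Antitone l.part :=
  List.antitone_getD_zero l.pairwise_sortedParts

theorem part_card_parts (l : Ptn) : l.part l.2.parts.card = 0 := by
  rw [part_eq_getD, List.getD_eq_default]
  rw [← l.coe_sortedParts, Multiset.coe_card]

theorem part_injective : Function.Injective Ptn.part := by
  intro l₁ l₂ h
  have hs : l₁.sortedParts = l₂.sortedParts :=
    List.eq_of_getD_zero_eq l₁.zero_notMem_sortedParts l₂.zero_notMem_sortedParts (congrFun h)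
  have hp : l₁.2.parts = l₂.2.parts := by rw [← l₁.coe_sortedParts, hs, coe_sortedParts]
  obtain ⟨m₁, p₁⟩ := l₁
  obtain ⟨m₂, p₂⟩ := l₂
  obtain rfl : m₁ = m₂ := by rw [← p₁.parts_sum, ← p₂.parts_sum, hp]
  exact congrArg (Sigma.mk m₁) (Nat.Partition.ext hp)

theorem exists_sortedParts_eq {L : List ℕ} (hs : L.Pairwise (· ≥ ·)) (h0 : 0 ∉ L) :
    ∃ l : Ptn, l.sortedParts = L := by
  refine ⟨⟨L.sum, ⟨L, fun {i} hi => Nat.pos_of_ne_zero ?_, by simp⟩⟩, ?_⟩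
  · rintro rfl; exact h0 hi
  · change ((L : Multiset ℕ).sort (· ≤ ·)).reverse = L
    rw [List.reverse_eq_iff]
    refine List.Perm.eq_of_pairwise' (r := (· ≤ ·)) (Multiset.pairwise_sort _ _)
      (List.pairwise_reverse.2 hs) ?_
    exact (Multiset.coe_eq_coe.1 (Multiset.sort_eq _ _)).trans (List.reverse_perm L).symm

theorem exists_part_eq {f : ℕ → ℕ} (hf : Antitone f) {N : ℕ} (hN : f N = 0) :
    ∃ l : Ptn, l.part = f := by
  classical
  have hex : ∃ M, f M = 0 := ⟨N, hN⟩
  set M := Nat.find hex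
  have hpos : ∀ i < M, f i ≠ 0 := fun i hi => Nat.find_min hex hi
  have hzero : ∀ i, M ≤ i → f i = 0 := fun i hi => Nat.le_zero.1 (Nat.find_spec hex ▸ hf hi)
  obtain ⟨l, hl⟩ := exists_sortedParts_eq (L := (List.range M).map f)
    (List.pairwise_lt_range.map f fun a b hab => hf hab.le)
    (by simpa [eq_comm] using hpos)
  refine ⟨l, funext fun i => ?_⟩
  rw [part_eq_getD, hl, List.getD_eq_getElem?_getD, List.getElem?_map]
  rcases lt_or_ge i M with hi | hi
  · simp [List.getElem?_range hi]
  · simp [hi, hzero i hi]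

end Ptn

open Finset

theorem Antitone.sum_Ico_tsub_succ {f : ℕ → ℕ} (hf : Antitone f) {N : ℕ} (hN : f N = 0)
    (i : ℕ) : ∑ j ∈ Ico i N, (f j - f (j + 1)) = f i := by
  rcases le_or_gt N i with hNi | hiN
  · rw [Ico_eq_empty_of_le hNi, sum_empty]
    exact (Nat.le_zero.1 (hN ▸ hf hNi)).symm
  · have telescope : ∀ k, i ≤ k → ∑ j ∈ Ico i k, (f j - f (j + 1)) = f i - f k := by
      intro k hik
      induction k, hik using Nat.le_induction with
      | base => simp
      | succ k hik ih =>
        rw [sum_Ico_succ_top hik, ih]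
        have := hf hik
        have := hf (Nat.le_add_right k 1)
        omega
    rw [telescope N hiN.le, hN, Nat.sub_zero]

theorem antitone_sum_Ico (d : ℕ → ℕ) (N : ℕ) : Antitone fun i => ∑ j ∈ Ico i N, d j :=
  fun _ _ hij => sum_le_sum_of_subset (Ico_subset_Ico_left hij)

theorem sum_Ico_tsub_sum_Ico_succ_le (d : ℕ → ℕ) (N i : ℕ) :
    ∑ j ∈ Ico i N, d j - ∑ j ∈ Ico (i + 1) N, d j ≤ d i := by
  rcases lt_or_ge i N with hiN | hNi
  · rw [sum_eq_sum_Ico_succ_bot hiN]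
    omega
  · rw [Ico_eq_empty_of_le hNi, sum_empty, Nat.zero_sub]
    exact Nat.zero_le _

section Decomposition

variable (n N : ℕ) (f : ℕ → ℕ)

/-- With `f N = 0`, this is the sum of `(f j - f (j + 1)) % n` over all `j ≥ i`. -/
def restrictedPart (i : ℕ) : ℕ := ∑ j ∈ Ico i N, (f j - f (j + 1)) % n

def quotientPart (i : ℕ) : ℕ := ∑ j ∈ Ico i N, (f j - f (j + 1)) / n

theorem antitone_restrictedPart : Antitone (restrictedPart n N f) := antitone_sum_Ico _ N

theorem antitone_quotientPart : Antitone (quotientPart n N f) := antitone_sum_Ico _ N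

theorem restrictedPart_self : restrictedPart n N f N = 0 := by simp [restrictedPart]

theorem quotientPart_self : quotientPart n N f N = 0 := by simp [quotientPart]

variable {n N f}

theorem restrictedPart_tsub_succ_lt (hn : 0 < n) (i : ℕ) :
    restrictedPart n N f i - restrictedPart n N f (i + 1) < n :=
  (sum_Ico_tsub_sum_Ico_succ_le _ N i).trans_lt (Nat.mod_lt _ hn)

theorem restrictedPart_add_mul_quotientPart (hf : Antitone f) (hN : f N = 0) (i : ℕ) :
    restrictedPart n N f i + n * quotientPart n N f i = f i := by
  rw [restrictedPart, quotientPart, mul_sum, ← sum_add_distrib]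
  simp_rw [Nat.mod_add_div]
  exact hf.sum_Ico_tsub_succ hN i

variable {μ ν : ℕ → ℕ}

theorem tsub_succ_div_and_mod_eq (hn : 0 < n) (hμ : Antitone μ) (hν : Antitone ν)
    (hres : ∀ i, μ i - μ (i + 1) < n) (hdec : ∀ i, f i = μ i + n * ν i) (i : ℕ) :
    (f i - f (i + 1)) / n = ν i - ν (i + 1) ∧ (f i - f (i + 1)) % n = μ i - μ (i + 1) := by
  refine (Nat.div_mod_unique hn).2 ⟨?_, hres i⟩
  rw [hdec, hdec, Nat.mul_sub]
  have := hμ (Nat.le_add_right i 1)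
  have := Nat.mul_le_mul_left n (hν (Nat.le_add_right i 1))
  omega

theorem eq_restrictedPart_and_quotientPart (hn : 0 < n) (hN : f N = 0) (hμ : Antitone μ)
    (hν : Antitone ν) (hres : ∀ i, μ i - μ (i + 1) < n) (hdec : ∀ i, f i = μ i + n * ν i) :
    μ = restrictedPart n N f ∧ ν = quotientPart n N f := by
  obtain ⟨hμN, hνN⟩ : μ N = 0 ∧ ν N = 0 := by simpa [hN, hn.ne', eq_comm] using hdec N
  have hjumps := tsub_succ_div_and_mod_eq hn hμ hν hres hdec
  constructor <;> funext i
  · rw [← hμ.sum_Ico_tsub_succ hμN i, restrictedPart]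
    exact sum_congr rfl fun j _ => (hjumps j).2.symm
  · rw [← hν.sum_Ico_tsub_succ hνN i, quotientPart]
    exact sum_congr rfl fun j _ => (hjumps j).1.symm

end Decomposition

open Ptn in
/-- **Lemma**.  Let `n ≥ 2`.  Every partition `λ` admits a unique decomposition
`λ = μ + nν` with `μ`, `ν` partitions and `μ` `n`-restricted. -/
theorem existsUnique_restricted_decomposition (n : ℕ) (hn : 2 ≤ n) (lam : Ptn) :
    ∃! p : Ptn × Ptn, p.1.Restricted n ∧
      ∀ i : ℕ, lam.part i = p.1.part i + n * p.2.part i := by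
  have hn₀ : 0 < n := by omega
  set N := lam.2.parts.card
  have hN : lam.part N = 0 := lam.part_card_parts
  obtain ⟨μ, hμ⟩ := exists_part_eq (antitone_restrictedPart n N lam.part)
    (restrictedPart_self n N lam.part)
  obtain ⟨ν, hν⟩ := exists_part_eq (antitone_quotientPart n N lam.part)
    (quotientPart_self n N lam.part)
  refine ⟨(μ, ν), ⟨fun i => ?_, fun i => ?_⟩, ?_⟩
  · rw [hμ]
    exact restrictedPart_tsub_succ_lt hn₀ i
  · rw [hμ, hν, restrictedPart_add_mul_quotientPart lam.part_antitone hN]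
  · rintro ⟨μ', ν'⟩ ⟨hres, hdec⟩
    obtain ⟨hμ', hν'⟩ := eq_restrictedPart_and_quotientPart hn₀ hN μ'.part_antitone
      ν'.part_antitone hres hdec
    exact Prod.ext (part_injective (hμ'.trans hμ.symm)) (part_injective (hν'.trans hν.symm))
end
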